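/- arXiv:1904.05345 — 3 statements merged into one kernel-verified Lean document; each statement's English description precedes it below -/
import Mathlib

section
/- Let α be an ultrafilter on a CAT(0) cube complex X not satisfying the descending chain condition (i.e., α ∈ ∂X), let h ∈ α be a halfspace, and let l₁ ⊃ l₂ ⊃ l₃ ⊃ ⋯ be an infinite strictly nested sequence of halfspaces in α. Then there exists N such that either the hyperplane ĥ intersects the hyperplane l̂ₙ for all n ≥ N, or lₙ ⊆ h for all n ≥ N. In particular, if h is a minimal element of α (under inclusion), then ĥ intersects l̂ₙ for all n > N. -/
/-- Abstract combinatorial model of a CAT(0) cube complex: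
vertices of the 1-skeleton, adjacency, and the collection of halfspaces
(as vertex sets). -/
structure CCC where
  V : Type
  adj : V → V → Prop
  HS : Set (Set V)

namespace CCC

variable (X : CCC)

/-- Combinatorial walks in the 1-skeleton. -/
inductive Walk : X.V → X.V → ℕ → Prop
  | nil (v : X.V) : Walk v v 0
  | cons {u v w : X.V} {n : ℕ} : X.adj u v → Walk v w n → Walk u w (n + 1)

/-- Combinatorial distance in the 1-skeleton. -/
noncomputable def edist (u v : X.V) : ℕ∞ :=
  sInf {n : ℕ∞ | ∃ m : ℕ, n = (m : ℕ∞) ∧ Walk X u v m}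

/-- Axioms of a CAT(0) cube complex (median-graph/pocset formulation):
symmetric irreflexive adjacency, halfspaces closed under complement,
each edge is separated by a unique wall, and the complex is connected. -/
def IsCubical : Prop :=
  (∀ u v : X.V, X.adj u v → X.adj v u) ∧
  (∀ v : X.V, ¬ X.adj v v) ∧
  (∀ h ∈ X.HS, hᶜ ∈ X.HS) ∧
  (∀ u v : X.V, X.adj u v → ∃ h ∈ X.HS, u ∈ h ∧ v ∉ h ∧
    ∀ k ∈ X.HS, u ∈ k → v ∉ k → k = h) ∧
  (∀ u v : X.V, ∃ n : ℕ, Walk X u v n)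

/-- Locally finite: every vertex has finitely many neighbours. -/
def LocFin : Prop := ∀ v : X.V, {u : X.V | X.adj v u}.Finite

/-- The edge (u,v) is dual to the hyperplane ĥ of the halfspace h. -/
def DualTo (h : Set X.V) (u v : X.V) : Prop :=
  X.adj u v ∧ ((u ∈ h ∧ v ∉ h) ∨ (v ∈ h ∧ u ∉ h))

/-- The hyperplanes ĥ and k̂ intersect (cross). -/
def Cross (h k : Set X.V) : Prop :=
  (h ∩ k).Nonempty ∧ (h ∩ kᶜ).Nonempty ∧ (hᶜ ∩ k).Nonempty ∧ (hᶜ ∩ kᶜ).Nonempty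

/-- h and k determine the same hyperplane. -/
def SameHyp (h k : Set X.V) : Prop := k = h ∨ k = hᶜ

/-- Positive carrier C⁺(h): vertices of h adjacent to an edge dual to ĥ. -/
def carrier (h : Set X.V) : Set X.V :=
  {v : X.V | v ∈ h ∧ ∃ u : X.V, X.adj v u ∧ u ∉ h}

/-- The hyperplane ĥ is contained in the set k: ĥ has a dual edge,
and every edge dual to ĥ has both endpoints in k. -/
def HypIn (h k : Set X.V) : Prop :=
  (∃ u v : X.V, X.DualTo h u v) ∧ ∀ u v : X.V, X.DualTo h u v → u ∈ k ∧ v ∈ k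

/-- An ultrafilter on X: a choice of one halfspace from each complementary
pair, upward closed under inclusion. -/
def IsUltra (α : Set (Set X.V)) : Prop :=
  α ⊆ X.HS ∧ (∀ h ∈ X.HS, (h ∈ α ↔ hᶜ ∉ α)) ∧
  (∀ h ∈ α, ∀ k ∈ X.HS, h ⊆ k → k ∈ α)

/-- α fails the descending chain condition, i.e. α ∈ ∂X (the Roller boundary):
α contains an infinite strictly descending chain of halfspaces. -/
def InRoller (α : Set (Set X.V)) : Prop :=
  ∃ c : ℕ → Set X.V, (∀ n, c n ∈ α) ∧ ∀ n, c (n + 1) ⊂ c n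

/-- A cage: a set of halfspaces whose positive carriers have a common point. -/
def Cage (K : Set (Set X.V)) : Prop :=
  K ⊆ X.HS ∧ (⋂ k ∈ K, X.carrier k).Nonempty

/-- X has caged hyperplanes: for every ultrafilter α ∈ ∂X and every cage
K ⊆ α, the intersection ⋂_{k∈K} k contains a hyperplane. -/
def CagedHyperplanes : Prop :=
  ∀ α : Set (Set X.V), X.IsUltra α → X.InRoller α →
    ∀ K ⊆ α, X.Cage K → ∃ h ∈ X.HS, ∀ k ∈ K, X.HypIn h k

/-- Non-terminating ultrafilter: every halfspace of α properly contains
another halfspace of α. -/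
def NonTerminating (α : Set (Set X.V)) : Prop :=
  X.IsUltra α ∧ ∀ h ∈ α, ∃ k ∈ α, k ⊂ h

/-- α ∈ B(X): α is an ultrafilter in the closure of the set of
non-terminating ultrafilters (every basic neighbourhood U_H, H a finite
subset of α, contains a non-terminating ultrafilter). -/
def InBX (α : Set (Set X.V)) : Prop :=
  X.IsUltra α ∧ ∀ H ⊆ α, H.Finite → ∃ β : Set (Set X.V), X.NonTerminating β ∧ H ⊆ β

/-- Straight links: at every vertex, every edge admits another adjacent edge
whose dual hyperplane is distinct from, and does not cross, its own. -/
def StraightLinks : Prop :=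
  ∀ v u : X.V, X.adj v u → ∀ h ∈ X.HS, X.DualTo h v u →
    ∃ w : X.V, X.adj v w ∧ ∃ k ∈ X.HS, X.DualTo k v w ∧ ¬ X.SameHyp h k ∧ ¬ X.Cross h k

/-- Essential: every halfspace contains vertices arbitrarily far from its
hyperplane (i.e. from every vertex of an edge dual to it). -/
def Essential : Prop :=
  ∀ h ∈ X.HS, ∀ R : ℕ, ∃ w ∈ h, ∀ u v : X.V, X.DualTo h u v → (R : ℕ∞) < X.edist w u

/-- p is a combinatorial geodesic: an edge path of minimal length among all
edge paths with the same endpoints. -/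
def IsGeo (p : List X.V) : Prop :=
  p.Chain' X.adj ∧ ∀ q : List X.V, q.Chain' X.adj →
    q.head? = p.head? → q.getLast? = p.getLast? → p.length ≤ q.length

/-- Convex subcomplex (on vertices): contains every geodesic between its
vertices. -/
def Convex (Y : Set X.V) : Prop :=
  ∀ p : List X.V, X.IsGeo p →
    (∃ u ∈ Y, p.head? = some u) → (∃ v ∈ Y, p.getLast? = some v) →
    ∀ w ∈ p, w ∈ Y

/-- Y has unbounded diameter. -/
def Unbounded (Y : Set X.V) : Prop :=
  ∀ D : ℕ, ∃ u ∈ Y, ∃ v ∈ Y, (D : ℕ∞) < X.edist u v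

/-- The core of a (tight) cage (S,T). -/
def core (S T : Set (Set X.V)) : Set X.V :=
  (⋂ t ∈ T, X.carrier t) ∩ (⋂ s ∈ S, s)

/-- Tight cage (S,T): finite families of halfspaces with |T| ≥ 2, every ŝ
(s ∈ S) meeting every hyperplane of S ∪ T, unbounded core, and every
hyperplane dual to an edge adjacent to the core either lying in Ŝ ∪ T̂ or
crossing every hyperplane of T̂. -/
def IsTightCage (S T : Set (Set X.V)) : Prop :=
  S ⊆ X.HS ∧ T ⊆ X.HS ∧ S.Finite ∧ T.Finite ∧ 2 ≤ T.ncard ∧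
  (∀ s ∈ S, ∀ h ∈ S ∪ T, X.SameHyp s h ∨ X.Cross s h) ∧
  X.Unbounded (X.core S T) ∧
  (∀ h ∈ X.HS, ∀ u v : X.V, u ∈ X.core S T → X.DualTo h u v →
    ((∃ k ∈ S ∪ T, X.SameHyp k h) ∨ ∀ t ∈ T, X.Cross h t))

/-- 2-dimensional: no three pairwise crossing hyperplanes. -/
def Dim2 : Prop :=
  ∀ h ∈ X.HS, ∀ k ∈ X.HS, ∀ l ∈ X.HS, ¬ (X.Cross h k ∧ X.Cross h l ∧ X.Cross k l)

/-- Automorphisms of X. -/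
structure AutCC where
  e : X.V ≃ X.V
  adj_iff : ∀ u v : X.V, X.adj (e u) (e v) ↔ X.adj u v
  hs : ∀ h ∈ X.HS, e '' h ∈ X.HS

/-- Cocompact: finitely many orbits of vertices under Aut(X). -/
def Cocompact : Prop :=
  ∃ F : Set X.V, F.Finite ∧ ∀ v : X.V, ∃ g : X.AutCC, ∃ u ∈ F, g.e u = v

end CCC

/-- Halfspaces separating the endpoints of a walk form a finite set. -/
lemma sep_finite (X : CCC) (hX : X.IsCubical) {n : ℕ} {u v : X.V}
    (w : X.Walk u v n) : {k | k ∈ X.HS ∧ u ∈ k ∧ v ∉ k}.Finite := by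
  induction w with
  | nil v =>
      refine Set.Finite.subset (Set.finite_empty) ?_
      rintro k ⟨-, hk1, hk2⟩; exact absurd hk1 hk2
  | @cons u v w n a wk ih =>
      obtain ⟨h₀, h₀HS, hu, hv, huniq⟩ := hX.2.2.2.1 u v a
      refine Set.Finite.subset (ih.union (Set.finite_singleton h₀)) ?_
      rintro k ⟨kHS, hku, hkw⟩
      by_cases hkv : v ∈ k
      · exact Or.inl ⟨kHS, hkv, hkw⟩
      · exact Or.inr (huniq k kHS hku hkv)

/-- for α ∈ ∂X, h ∈ α, and an infinite strictly nested chain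
l₁ ⊃ l₂ ⊃ ⋯ in α, eventually either ĥ crosses every l̂ₙ or every lₙ ⊆ h;
and if h is minimal in α then ĥ eventually crosses every l̂ₙ. -/
theorem stmt2 (X : CCC) (hX : X.IsCubical) (α : Set (Set X.V))
    (hα : X.IsUltra α) (hbd : X.InRoller α)
    (h : Set X.V) (hhα : h ∈ α)
    (l : ℕ → Set X.V) (hl : ∀ n, l n ∈ α) (hnest : ∀ n, l (n + 1) ⊂ l n) :
    (∃ N, (∀ n ≥ N, X.Cross h (l n)) ∨ ∀ n ≥ N, l n ⊆ h) ∧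
    ((∀ k ∈ α, k ⊆ h → k = h) → ∃ N, ∀ n > N, X.Cross h (l n)) := by
  obtain ⟨hsub, hpair, hup⟩ := hα
  have hanti : StrictAnti l :=
    strictAnti_nat_of_succ_lt fun n => Set.lt_iff_ssubset.2 (hnest n)
  have hinj : Function.Injective l := hanti.injective
  have hmono : ∀ {m n : ℕ}, m ≤ n → l n ⊆ l m := by
    intro m n hmn
    rcases eq_or_lt_of_le hmn with rfl | hlt
    · exact subset_rfl
    · exact (Set.lt_iff_ssubset.1 (hanti hlt)).1
  have hne : ∀ k ∈ α, k.Nonempty := by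
    intro k hk
    rcases Set.eq_empty_or_nonempty k with rfl | hk'
    · exfalso
      have hkHS := hsub hk
      have hcompl : (∅ : Set X.V)ᶜ ∈ α :=
        hup ∅ hk _ (hX.2.2.1 _ hkHS) (Set.empty_subset _)
      exact (hpair ∅ hkHS).1 hk hcompl
    · exact hk'
  have main : ∃ N, (∀ n ≥ N, X.Cross h (l n)) ∨ ∀ n ≥ N, l n ⊆ h := by
    by_cases hc : ∃ N, l N ⊆ h
    · obtain ⟨N, hN⟩ := hc
      exact ⟨N, Or.inr fun n hn => (hmono hn).trans hN⟩
    · push_neg at hc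
      by_contra hall
      push_neg at hall
      obtain ⟨u, hu⟩ := hne h hhα
      have hhc : hᶜ.Nonempty := by
        rcases Set.eq_empty_or_nonempty hᶜ with he | hne'
        · exact absurd (fun x _ => by
            have := Set.compl_empty_iff.1 he
            simp [this]) (hc 0)
        · exact hne'
      obtain ⟨u', hu'⟩ := hhc
      have key : ∀ N, ∃ n ≥ N, u ∈ l n ∨ u' ∈ l n := by
        intro N
        obtain ⟨n, hn, hcr⟩ := (hall N).1
        refine ⟨n, hn, ?_⟩
        rcases Set.eq_empty_or_nonempty (h ∩ l n) with e1 | ne1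
        · exfalso
          have hsubc : h ⊆ (l n)ᶜ := fun x hx hxl =>
            Set.eq_empty_iff_forall_notMem.1 e1 x ⟨hx, hxl⟩
          have : (l n)ᶜ ∈ α := hup h hhα _ (hX.2.2.1 _ (hsub (hl n))) hsubc
          exact (hpair (l n) (hsub (hl n))).1 (hl n) this
        rcases Set.eq_empty_or_nonempty (h ∩ (l n)ᶜ) with e2 | ne2
        · left
          by_contra hun
          exact Set.eq_empty_iff_forall_notMem.1 e2 u ⟨hu, hun⟩
        rcases Set.eq_empty_or_nonempty (hᶜ ∩ l n) with e3 | ne3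
        · exfalso
          refine hc n fun x hx => ?_
          by_contra hx'
          exact Set.eq_empty_iff_forall_notMem.1 e3 x ⟨hx', hx⟩
        rcases Set.eq_empty_or_nonempty (hᶜ ∩ (l n)ᶜ) with e4 | ne4
        · right
          by_contra hun
          exact Set.eq_empty_iff_forall_notMem.1 e4 u' ⟨hu', hun⟩
        · exact absurd ⟨ne1, ne2, ne3, ne4⟩ hcr
      have key2 : ∃ w, ∀ N, ∃ n ≥ N, w ∈ l n := by
        by_contra hw
        push_neg at hw
        obtain ⟨N1, hN1⟩ := hw u
        obtain ⟨N2, hN2⟩ := hw u'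
        obtain ⟨n, hn, hor⟩ := key (max N1 N2)
        rcases hor with h1 | h2
        · exact hN1 n (le_trans (le_max_left _ _) hn) h1
        · exact hN2 n (le_trans (le_max_right _ _) hn) h2
      obtain ⟨w, hw⟩ := key2
      have hwall : ∀ n, w ∈ l n := fun n => by
        obtain ⟨m, hm, hwm⟩ := hw n
        exact hmono hm hwm
      obtain ⟨y, hy0, hy1⟩ := Set.exists_of_ssubset (hnest 0)
      have hyn : ∀ n : ℕ, y ∉ l (n + 1) := fun n hy =>
        hy1 (hmono (Nat.succ_le_succ (Nat.zero_le n)) hy)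
      obtain ⟨m, wk⟩ := hX.2.2.2.2 w y
      have hfin := sep_finite X hX wk
      have hsubr : Set.range (fun n => l (n + 1)) ⊆
          {k | k ∈ X.HS ∧ w ∈ k ∧ y ∉ k} := by
        rintro k ⟨n, rfl⟩
        exact ⟨hsub (hl (n + 1)), hwall (n + 1), hyn n⟩
      have hinf : (Set.range fun n => l (n + 1)).Infinite :=
        Set.infinite_range_of_injective fun a b hab =>
          Nat.succ_injective (hinj hab)
      exact hinf (hfin.subset hsubr)
  refine ⟨main, fun hmin => ?_⟩
  obtain ⟨N, hN⟩ := main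
  rcases hN with hcr | hss
  · exact ⟨N, fun n hn => hcr n (le_of_lt hn)⟩
  · exfalso
    have e1 : l N = h := hmin _ (hl N) (hss N le_rfl)
    have e2 : l (N + 1) = h := hmin _ (hl (N + 1)) (hss (N + 1) (Nat.le_succ N))
    have hx := hnest N
    rw [e1, e2] at hx
    exact hx.2 subset_rfl
end

section
/- Let X be a CAT(0) cube complex with straight links and let K be a cage such that for some k₀ ∈ K the hyperplane k̂₀ intersects k̂ for every k ∈ K. Then there exists an ultrafilter α on X failing the descending chain condition (α ∈ ∂X) with K ⊆ α. -/
namespace CCC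

variable {X : CCC}

/-- Uniqueness of the wall dual to an edge. -/
lemma wall_uniq (hX : X.IsCubical) {u v : X.V} (huv : X.adj u v)
    {a b : Set X.V} (ha : a ∈ X.HS) (hb : b ∈ X.HS)
    (hua : u ∈ a) (hva : v ∉ a) (hub : u ∈ b) (hvb : v ∉ b) : a = b := by
  obtain ⟨h, _, _, _, huniq⟩ := hX.2.2.2.1 u v huv
  rw [huniq a ha hua hva, huniq b hb hub hvb]

lemma cross_compl_right {a b : Set X.V} (h : X.Cross a bᶜ) : X.Cross a b := by
  obtain ⟨h1, h2, h3, h4⟩ := h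
  rw [compl_compl] at h2 h4
  exact ⟨h2, h1, h4, h3⟩

lemma sameHyp_compl_right {a b : Set X.V} (h : X.SameHyp a bᶜ) : X.SameHyp a b := by
  rcases h with h | h
  · exact Or.inr (by rw [← h, compl_compl])
  · exact Or.inl (by have := congrArg compl h; rwa [compl_compl, compl_compl] at this)

/-- A good triple `(a, b, c)`: an edge `a–b` dual to the wall of the
halfspace `c`, entering `c`. -/
def GoodTriple (X : CCC) (p : X.V × X.V × Set X.V) : Prop :=
  X.adj p.1 p.2.1 ∧ p.2.2 ∈ X.HS ∧ p.1 ∉ p.2.2 ∧ p.2.1 ∈ p.2.2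

lemma step_exists (hX : X.IsCubical) (hsl : X.StraightLinks)
    (p : X.V × X.V × Set X.V) (hp : GoodTriple X p) :
    ∃ q : X.V × X.V × Set X.V, GoodTriple X q ∧ q.1 = p.2.1 ∧
      ¬ X.SameHyp p.2.2 q.2.2 ∧ ¬ X.Cross p.2.2 q.2.2 := by
  obtain ⟨a, b, c⟩ := p
  obtain ⟨hab, hc, hac, hbc⟩ := hp
  have hba : X.adj b a := hX.1 a b hab
  obtain ⟨w, hbw, k', hk', hdual, hnsh, hncr⟩ :=
    hsl b a hba c hc ⟨hba, Or.inl ⟨hbc, hac⟩⟩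
  rcases hdual.2 with ⟨hbk, hwk⟩ | ⟨hwk, hbk⟩
  · refine ⟨(b, w, k'ᶜ), ⟨hbw, hX.2.2.1 k' hk', by simp [hbk], hwk⟩, rfl, ?_, ?_⟩
    · exact fun h => hnsh (sameHyp_compl_right h)
    · exact fun h => hncr (cross_compl_right h)
  · exact ⟨(b, w, k'), ⟨hbw, hk', hbk, hwk⟩, rfl, hnsh, hncr⟩

/-- Construction of the ray: a sequence of vertices and a sequence of
halfspaces dual to consecutive edges, consecutive walls distinct and
non-crossing. -/
lemma exists_ray (hX : X.IsCubical) (hsl : X.StraightLinks)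
    {u₀ v₀ : X.V} {k₀ : Set X.V} (h0 : GoodTriple X (u₀, v₀, k₀)) :
    ∃ v : ℕ → X.V, ∃ c : ℕ → Set X.V, v 1 = v₀ ∧ c 0 = k₀ ∧
      ∀ n, X.adj (v n) (v (n+1)) ∧ c n ∈ X.HS ∧ v n ∉ c n ∧ v (n+1) ∈ c n ∧
        ¬ X.SameHyp (c n) (c (n+1)) ∧ ¬ X.Cross (c n) (c (n+1)) := by
  have H : ∀ p : {p : X.V × X.V × Set X.V // GoodTriple X p},
      ∃ q : {p : X.V × X.V × Set X.V // GoodTriple X p},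
        q.1.1 = p.1.2.1 ∧ ¬ X.SameHyp p.1.2.2 q.1.2.2 ∧ ¬ X.Cross p.1.2.2 q.1.2.2 := by
    rintro ⟨p, hp⟩
    obtain ⟨q, hq, h1, h2, h3⟩ := step_exists hX hsl p hp
    exact ⟨⟨q, hq⟩, h1, h2, h3⟩
  choose step h1 h2 h3 using H
  set f : ℕ → {p : X.V × X.V × Set X.V // GoodTriple X p} :=
    fun n => step^[n] ⟨(u₀, v₀, k₀), h0⟩ with hf
  have hfs : ∀ n, f (n+1) = step (f n) := by
    intro n; simp [hf, Function.iterate_succ_apply']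
  refine ⟨fun n => (f n).1.1, fun n => (f n).1.2.2, ?_, rfl, ?_⟩
  · show (f (0+1)).1.1 = v₀
    rw [hfs 0, h1]; rfl
  · intro n
    have hv : (f (n+1)).1.1 = (f n).1.2.1 := by rw [hfs n]; exact h1 (f n)
    have hg := (f n).2
    refine ⟨?_, hg.2.1, hg.2.2.1, ?_, ?_, ?_⟩
    · show X.adj (f n).1.1 (f (n+1)).1.1
      rw [hv]; exact hg.1
    · show (f (n+1)).1.1 ∈ (f n).1.2.2
      rw [hv]; exact hg.2.2.2
    · show ¬ X.SameHyp (f n).1.2.2 (f (n+1)).1.2.2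
      rw [hfs n]; exact h2 (f n)
    · show ¬ X.Cross (f n).1.2.2 (f (n+1)).1.2.2
      rw [hfs n]; exact h3 (f n)

end CCC

/-- if X has straight links and K is a cage such that some
k₀ ∈ K has k̂₀ meeting every hyperplane of K̂, then some ultrafilter of the
Roller boundary contains K. -/
theorem stmt9 (X : CCC) (hX : X.IsCubical) (hsl : X.StraightLinks)
    (K : Set (Set X.V)) (hK : X.Cage K) (hfin : K.Finite)
    (k₀ : Set X.V) (hk₀ : k₀ ∈ K)
    (hcross : ∀ k ∈ K, X.SameHyp k₀ k ∨ X.Cross k₀ k) :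
    ∃ α : Set (Set X.V), X.IsUltra α ∧ X.InRoller α ∧ K ⊆ α := by
  obtain ⟨hKHS, v₀, hv₀⟩ := hK
  have hv₀mem : ∀ k ∈ K, v₀ ∈ X.carrier k := by
    intro k hk
    exact Set.mem_iInter₂.1 hv₀ k hk
  obtain ⟨hv₀k₀, u₀, hadj, hu₀⟩ := hv₀mem k₀ hk₀
  have hk₀HS : k₀ ∈ X.HS := hKHS hk₀
  -- build the ray
  obtain ⟨v, c, hv1, hc0, hprop⟩ :=
    CCC.exists_ray hX hsl (u₀ := u₀) (v₀ := v₀) (k₀ := k₀)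
      ⟨hX.1 v₀ u₀ hadj, hk₀HS, hu₀, hv₀k₀⟩
  have hadjv : ∀ n, X.adj (v n) (v (n+1)) := fun n => (hprop n).1
  have hcHS : ∀ n, c n ∈ X.HS := fun n => (hprop n).2.1
  have hvout : ∀ n, v n ∉ c n := fun n => (hprop n).2.2.1
  have hvin : ∀ n, v (n+1) ∈ c n := fun n => (hprop n).2.2.2.1
  have hnsh : ∀ n, ¬ X.SameHyp (c n) (c (n+1)) := fun n => (hprop n).2.2.2.2.1
  have hncr : ∀ n, ¬ X.Cross (c n) (c (n+1)) := fun n => (hprop n).2.2.2.2.2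
  -- the ray crosses nested hyperplanes
  have key1 : ∀ n, v (n+2) ∈ c n := by
    intro n
    by_contra h
    have : c n = (c (n+1))ᶜ :=
      CCC.wall_uniq hX (hadjv (n+1)) (hcHS n) (hX.2.2.1 _ (hcHS (n+1)))
        (hvin n) h (hvout (n+1)) (by simp only [Set.mem_compl_iff, not_not]; exact hvin (n+1))
    exact hnsh n (Or.inr (by rw [this, compl_compl]))
  have key2 : ∀ n, v n ∉ c (n+1) := by
    intro n h
    have : c (n+1) = (c n)ᶜ :=
      CCC.wall_uniq hX (hadjv n) (hcHS (n+1)) (hX.2.2.1 _ (hcHS n))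
        h (hvout (n+1)) (hvout n) (by simp only [Set.mem_compl_iff, not_not]; exact hvin n)
    exact hnsh n (Or.inr this)
  have hsub : ∀ n, c (n+1) ⊆ c n := by
    intro n x hx
    by_contra hxc
    exact hncr n ⟨⟨v (n+2), key1 n, hvin (n+1)⟩, ⟨v (n+1), hvin n, hvout (n+1)⟩,
      ⟨x, hxc, hx⟩, ⟨v n, hvout n, key2 n⟩⟩
  have hchain : ∀ n m, n ≤ m → c m ⊆ c n := by
    intro n m hnm
    induction hnm with
    | refl => exact subset_rfl
    | step h ih => exact fun x hx => ih (hsub _ hx)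
  -- the ray stays inside every halfspace of K
  have hmemK : ∀ n, ∀ k ∈ K, v (n+1) ∈ k := by
    intro n
    induction n with
    | zero => intro k hk; rw [hv1]; exact (hv₀mem k hk).1
    | succ n ih =>
      intro k hk
      by_contra hvk
      have hkHS : k ∈ X.HS := hKHS hk
      have hkc : k = (c (n+1))ᶜ :=
        CCC.wall_uniq hX (hadjv (n+1)) hkHS (hX.2.2.1 _ (hcHS (n+1)))
          (ih k hk) hvk (hvout (n+1)) (by simp only [Set.mem_compl_iff, not_not]; exact hvin (n+1))
      have hcsub : c (n+1) ⊆ k₀ := by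
        rw [← hc0]; exact hchain 0 (n+1) (Nat.zero_le _)
      rcases hcross k hk with h | h
      · rcases h with h | h
        · -- k = k₀, so c (n+1) = k₀ᶜ ⊆ k₀, contradiction at v (n+2)
          have hc : c (n+1) = k₀ᶜ := by
            rw [← h, hkc, compl_compl]
          have h1 : v (n+2) ∈ k₀ := hcsub (hvin (n+1))
          have h2 : v (n+2) ∉ k₀ := by rw [← compl_compl k₀, ← hc]; simp only [Set.mem_compl_iff, not_not]; exact hvin (n+1)
          exact h2 h1
        · -- k = k₀ᶜ : but v 1 = v₀ ∈ k ∩ k₀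
          have h1 : v₀ ∈ k := (hv₀mem k hk).1
          rw [h] at h1
          exact h1 hv₀k₀
      · -- Cross k₀ k with kᶜ = c (n+1) ⊆ k₀
        obtain ⟨-, -, -, x, hx1, hx2⟩ := h
        rw [hkc, compl_compl] at hx2
        exact hx1 (hcsub hx2)
  -- the ultrafilter on ℕ
  let U : Ultrafilter ℕ := Ultrafilter.of Filter.cofinite
  have hUco : ∀ s : Set ℕ, s ∈ (Filter.cofinite : Filter ℕ) → s ∈ U :=
    fun s hs => Ultrafilter.of_le Filter.cofinite hs
  refine ⟨{h | h ∈ X.HS ∧ {n : ℕ | v (n+1) ∈ h} ∈ U}, ⟨fun h hh => hh.1, ?_, ?_⟩, ?_, ?_⟩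
  · intro h hh
    have hcompl : {n : ℕ | v (n+1) ∈ hᶜ} = {n : ℕ | v (n+1) ∈ h}ᶜ := by
      ext n; simp [Set.mem_compl_iff]
    constructor
    · rintro ⟨-, hs⟩ ⟨-, hs'⟩
      rw [hcompl, Ultrafilter.compl_mem_iff_notMem] at hs'
      exact hs' hs
    · intro hn
      refine ⟨hh, ?_⟩
      by_contra hs
      exact hn ⟨hX.2.2.1 h hh, by rwa [hcompl, Ultrafilter.compl_mem_iff_notMem]⟩
  · rintro h ⟨-, hs⟩ k hkHS hsub'
    exact ⟨hkHS, Filter.mem_of_superset hs fun n hn => hsub' hn⟩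
  · refine ⟨c, fun n => ⟨hcHS n, ?_⟩, fun n => ?_⟩
    · refine Filter.mem_of_superset (hUco {m : ℕ | n ≤ m} ?_) ?_
      · rw [Filter.mem_cofinite]
        have : {m : ℕ | n ≤ m}ᶜ = {m : ℕ | m < n} := by ext m; simp
        rw [this]
        exact Set.finite_Iio n
      · intro m hm
        exact hchain n m hm (hvin m)
    · exact ⟨hsub n, fun hcc => hvout (n+1) (hcc (hvin n))⟩
  · intro k hk
    refine ⟨hKHS hk, Filter.mem_of_superset Filter.univ_mem fun n _ => hmemK n k hk⟩
end

section
/- Let X be an essential, cocompact, locally finite, Euclidean CAT(0) cube complex of Euclidean dimension 1 (i.e., X contains an Aut(X)-invariant geodesic line and no invariant flat of higher dimension). Then every hyperplane of X has finite diameter, every ultrafilter in ∂X is non-terminating, ∂X = B(X), X has caged hyperplanes, and X contains no tight cage. -/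
/-- X contains an Aut(X)-invariant (combinatorial) geodesic line. -/
def InvariantLine (X : CCC) : Prop :=
  ∃ f : ℤ → X.V, (∀ m n : ℤ, X.edist (f m) (f n) = ((m - n).natAbs : ℕ∞)) ∧
    ∀ g : X.AutCC, ∀ n : ℤ, g.e (f n) ∈ Set.range f

/-- X contains an Aut(X)-invariant n-dimensional (combinatorial, ℓ¹) flat. -/
def InvariantFlat (X : CCC) (n : ℕ) : Prop :=
  ∃ f : (Fin n → ℤ) → X.V,
    (∀ p q : Fin n → ℤ,
      X.edist (f p) (f q) = ((∑ i, (p i - q i).natAbs : ℕ) : ℕ∞)) ∧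
    ∀ g : X.AutCC, ∀ p, g.e (f p) ∈ Set.range f


/-!
Every vertex lies within bounded distance of the invariant line `ℓ`. If the carrier of a
hyperplane `ĥ` were unbounded, it would come close to `ℓ` at positions tending to infinity. Each
such position is reached by an automorphism moving one of finitely many edges onto `ĥ`, and
automorphisms act on `ℓ` by `n ↦ s ± n`; two of them with the same edge and sign but far apart
positions differ by a translation of `ℓ` preserving `ĥ`. The carrier of `ĥ` would then come
uniformly close to every vertex, against essentiality. As hyperplanes fall into finitely many
orbits, their diameters are bounded by a uniform `D`.

So `ℓ` crosses each hyperplane within a window of width `D`, and essentiality puts the two ends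
of `ℓ` on opposite sides. The halfspaces containing the end of `ℓ` at `+∞`, resp. `-∞`, form
non-terminating ultrafilters, and they are the only points of `∂X`: only finitely many
halfspaces cross `ℓ` in a given window, so a strictly descending chain in an ultrafilter crosses
`ℓ` ever further towards one end and eventually lies inside every halfspace of that end. Caged
hyperplanes and the absence of tight cages follow from the uniform bound `D`.
-/

open Filter

theorem SimpleGraph.Hom.edist_map_le {V W : Type*} {G : SimpleGraph V} {G' : SimpleGraph W}
    (f : G →g G') (u v : V) : G'.edist (f u) (f v) ≤ G.edist u v :=
  le_iInf fun p => (SimpleGraph.edist_le (p.map f)).trans_eq (congrArg _ (p.length_map f))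

theorem SimpleGraph.Iso.edist_map {V W : Type*} {G : SimpleGraph V} {G' : SimpleGraph W}
    (φ : G ≃g G') (u v : V) : G'.edist (φ u) (φ v) = G.edist u v :=
  le_antisymm (φ.toHom.edist_map_le u v) (by simpa using φ.symm.toHom.edist_map_le (φ u) (φ v))

theorem SimpleGraph.Iso.dist_map {V W : Type*} {G : SimpleGraph V} {G' : SimpleGraph W}
    (φ : G ≃g G') (u v : V) : G'.dist (φ u) (φ v) = G.dist u v := by
  simp only [SimpleGraph.dist, φ.edist_map]

namespace Int

theorem iff_of_forall_iff_succ_of_le {P : ℤ → Prop} {b : ℤ}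
    (hP : ∀ i, b ≤ i → (P i ↔ P (i + 1))) {m : ℤ} (hm : b ≤ m) : P m ↔ P b := by
  induction m, hm using Int.leInduction with
  | base => rfl
  | succ n hn ih => exact (hP n hn).symm.trans ih

theorem iff_of_forall_iff_succ_of_lt {P : ℤ → Prop} {a : ℤ}
    (hP : ∀ i, i < a → (P i ↔ P (i + 1))) {m : ℤ} (hm : m ≤ a) : P m ↔ P a := by
  induction m, hm using Int.leInductionDown with
  | base => rfl
  | pred n hn ih => exact (by simpa using hP (n - 1) (by omega) : P (n - 1) ↔ P n).trans ih

theorem exists_eq_add_mul_of_isometry {σ : ℤ → ℤ}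
    (hσ : ∀ m n, (σ m - σ n).natAbs = (m - n).natAbs) :
    ∃ s : ℤ, ∃ ε : ℤˣ, ∀ n, σ n = s + ε * n := by
  have h10 := hσ 1 0
  rcases (by omega : σ 1 - σ 0 = 1 ∨ σ 1 - σ 0 = -1) with h | h <;>
  · refine ⟨σ 0, if σ 1 - σ 0 = 1 then 1 else -1, fun n => ?_⟩
    have := hσ n 0
    have := hσ n 1
    simp only [h]
    push_cast
    omega

theorem exists_mem_natAbs_sub_lt_of_periodic {S : Set ℤ} {c : ℤ} (hc : c ≠ 0)
    {p₀ : ℤ} (hp₀ : p₀ ∈ S) (hS : ∀ p, p ∈ S ↔ p + c ∈ S) (q : ℤ) :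
    ∃ p ∈ S, (q - p).natAbs < c.natAbs := by
  have hmul : ∀ j : ℤ, p₀ + j * c ∈ S := by
    intro j
    induction j using Int.induction_on with
    | zero => simpa using hp₀
    | succ j ih => rwa [add_mul, one_mul, ← add_assoc, ← hS]
    | pred j ih => rwa [hS, sub_mul, one_mul, add_sub, sub_add_cancel]
  refine ⟨p₀ + (q - p₀) / c * c, hmul _, ?_⟩
  have hdiv := Int.mul_ediv_add_emod (q - p₀) c
  rw [Int.mul_comm] at hdiv
  have := Int.emod_nonneg (q - p₀) hc
  have := Int.emod_lt (q - p₀) hc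
  omega

end Int

theorem Set.Infinite.exists_lt_natAbs_sub {S : Set ℤ} (hS : S.Infinite) (R : ℕ) :
    ∃ p ∈ S, ∃ q ∈ S, R < (p - q).natAbs := by
  obtain ⟨p, hp⟩ := hS.nonempty
  obtain ⟨q, hqS, hq⟩ := (hS.sdiff (Set.finite_Icc (p - R) (p + R))).nonempty
  refine ⟨p, hp, q, hqS, ?_⟩
  simp only [Set.mem_Icc, not_and_or, not_le] at hq
  omega

namespace CCC

def graph (X : CCC) : SimpleGraph X.V := SimpleGraph.fromRel X.adj

def hypCarrier (X : CCC) (h : Set X.V) : Set X.V := {v | ∃ w, X.DualTo h v w}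

def HypDiamLE (X : CCC) (D : ℕ) : Prop :=
  ∀ h ∈ X.HS, ∀ u ∈ X.hypCarrier h, ∀ v ∈ X.hypCarrier h, X.graph.dist u v ≤ D

variable {X : CCC}

theorem IsCubical.graph_adj (hX : X.IsCubical) {u v : X.V} : X.graph.Adj u v ↔ X.adj u v := by
  simp only [graph, SimpleGraph.fromRel_adj]
  exact ⟨fun h => h.2.elim id (hX.1 _ _), fun h => ⟨fun e => hX.2.1 v (e ▸ h), Or.inl h⟩⟩

theorem IsCubical.walk_iff (hX : X.IsCubical) {u v : X.V} {n : ℕ} :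
    X.Walk u v n ↔ ∃ p : X.graph.Walk u v, p.length = n := by
  constructor
  · intro hw
    induction hw with
    | nil v => exact ⟨.nil, rfl⟩
    | cons huv _ ih =>
      obtain ⟨p, rfl⟩ := ih
      exact ⟨.cons (hX.graph_adj.2 huv) p, rfl⟩
  · rintro ⟨p, rfl⟩
    induction p with
    | nil => exact .nil _
    | cons huv _ ih => exact .cons (hX.graph_adj.1 huv) ih

theorem IsCubical.preconnected (hX : X.IsCubical) : X.graph.Preconnected := fun u v =>
  let ⟨p, _⟩ := hX.walk_iff.1 (hX.2.2.2.2 u v).choose_spec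
  ⟨p⟩

theorem IsCubical.edist_eq_dist (hX : X.IsCubical) (u v : X.V) :
    X.edist u v = X.graph.dist u v := by
  rw [(hX.preconnected u v).coe_dist_eq_edist, SimpleGraph.edist_eq_sInf, edist]
  congr 1
  ext n
  simp only [Set.mem_ofPred_eq, Set.mem_range, hX.walk_iff]
  constructor
  · rintro ⟨m, rfl, p, rfl⟩
    exact ⟨p, rfl⟩
  · rintro ⟨p, rfl⟩
    exact ⟨_, rfl, p, rfl⟩

theorem IsCubical.compl_mem (hX : X.IsCubical) {h : Set X.V} (hh : h ∈ X.HS) : hᶜ ∈ X.HS :=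
  hX.2.2.1 h hh

theorem IsCubical.dist_triangle (hX : X.IsCubical) (u v w : X.V) :
    X.graph.dist u w ≤ X.graph.dist u v + X.graph.dist v w :=
  (hX.preconnected u v).dist_triangle_left w

theorem IsCubical.dualTo_comm (hX : X.IsCubical) {h : Set X.V} {u v : X.V} :
    X.DualTo h u v ↔ X.DualTo h v u := by
  unfold DualTo
  exact ⟨fun ⟨huv, hs⟩ => ⟨hX.1 _ _ huv, hs.symm⟩,
    fun ⟨hvu, hs⟩ => ⟨hX.1 _ _ hvu, hs.symm⟩⟩

theorem dualTo_compl {h : Set X.V} {u v : X.V} : X.DualTo hᶜ u v ↔ X.DualTo h u v := by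
  simp only [DualTo, Set.mem_compl_iff, not_not]
  tauto

theorem hypCarrier_compl (h : Set X.V) : X.hypCarrier hᶜ = X.hypCarrier h := by
  simp only [hypCarrier, dualTo_compl]

theorem carrier_union_carrier_compl (h : Set X.V) :
    X.carrier h ∪ X.carrier hᶜ = X.hypCarrier h := by
  ext v
  simp only [carrier, hypCarrier, DualTo, Set.mem_union, Set.mem_ofPred_eq, Set.mem_compl_iff,
    not_not]
  constructor
  · rintro (⟨hv, w, hvw, hw⟩ | ⟨hv, w, hvw, hw⟩)
    exacts [⟨w, hvw, Or.inl ⟨hv, hw⟩⟩, ⟨w, hvw, Or.inr ⟨hw, hv⟩⟩]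
  · rintro ⟨w, hvw, ⟨hv, hw⟩ | ⟨hw, hv⟩⟩
    exacts [Or.inl ⟨hv, w, hvw, hw⟩, Or.inr ⟨hv, w, hvw, hw⟩]

theorem SameHyp.hypCarrier_eq {h k : Set X.V} (hhk : X.SameHyp h k) :
    X.hypCarrier k = X.hypCarrier h := by
  rcases hhk with rfl | rfl
  exacts [rfl, hypCarrier_compl h]

theorem IsCubical.exists_dualTo (hX : X.IsCubical) {u v : X.V} (huv : X.adj u v) :
    ∃ h ∈ X.HS, u ∈ h ∧ v ∉ h :=
  let ⟨h, hh, hu, hv, _⟩ := hX.2.2.2.1 u v huv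
  ⟨h, hh, hu, hv⟩

theorem IsCubical.sameHyp_of_dualTo (hX : X.IsCubical) {h k : Set X.V} (hh : h ∈ X.HS)
    (hk : k ∈ X.HS) {x y : X.V} (hxy : X.DualTo h x y) (hxy' : X.DualTo k x y) :
    X.SameHyp h k := by
  obtain ⟨w, -, -, -, hw⟩ := hX.2.2.2.1 x y hxy.1
  have hwall : ∀ l ∈ X.HS, X.DualTo l x y → l = w ∨ lᶜ = w := by
    rintro l hl ⟨-, ⟨hx, hy⟩ | ⟨hy, hx⟩⟩
    · exact Or.inl (hw l hl hx hy)
    · exact Or.inr (hw lᶜ (hX.compl_mem hl) hx (not_not.2 hy))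
  rcases hwall h hh hxy with rfl | rfl <;> rcases hwall k hk hxy' with h' | h'
  · exact Or.inl h'
  · exact Or.inr (by rw [← h', compl_compl])
  · exact Or.inr h'
  · exact Or.inl (compl_injective h')

theorem IsCubical.exists_mem_hypCarrier_dist_le (hX : X.IsCubical) {h : Set X.V} {x y : X.V}
    (hxy : ¬(x ∈ h ↔ y ∈ h)) :
    ∃ a ∈ X.hypCarrier h, X.graph.dist x a ≤ X.graph.dist x y := by
  classical
  wlog hx : x ∈ h generalizing h
  · rw [← hypCarrier_compl]
    exact this (by simpa only [Set.mem_compl_iff, not_iff_not] using hxy) hx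
  obtain ⟨p, hp⟩ := (hX.preconnected x y).exists_walk_length_eq_dist
  obtain ⟨d, hd, hdh, hdh'⟩ := p.exists_boundary_dart h hx (by tauto)
  refine ⟨d.fst, ⟨d.snd, hX.graph_adj.1 d.adj, Or.inl ⟨hdh, hdh'⟩⟩, ?_⟩
  calc X.graph.dist x d.fst
      ≤ (p.takeUntil d.fst (p.dart_fst_mem_support_of_mem_darts hd)).length :=
        SimpleGraph.dist_le _
    _ ≤ p.length := p.length_takeUntil_le_length _
    _ = X.graph.dist x y := hp

theorem Essential.exists_lt_dist (hX : X.IsCubical) (hess : X.Essential) {h : Set X.V}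
    (hh : h ∈ X.HS) (R : ℕ) : ∃ w ∈ h, ∀ a ∈ X.hypCarrier h, R < X.graph.dist w a := by
  obtain ⟨w, hw, hfar⟩ := hess h hh R
  refine ⟨w, hw, fun a ⟨b, hab⟩ => ?_⟩
  have := hfar a b hab
  rwa [hX.edist_eq_dist, Nat.cast_lt] at this

def AutCC.toIso (g : X.AutCC) : X.graph ≃g X.graph where
  toEquiv := g.e
  map_rel_iff' {u v} := by
    simp only [graph, SimpleGraph.fromRel_adj, g.adj_iff, ne_eq, g.e.injective.eq_iff]

theorem AutCC.dist_map (g : X.AutCC) (u v : X.V) :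
    X.graph.dist (g.e u) (g.e v) = X.graph.dist u v :=
  g.toIso.dist_map u v

theorem AutCC.dualTo_image_iff (g : X.AutCC) {k : Set X.V} {a b : X.V} :
    X.DualTo (g.e '' k) (g.e a) (g.e b) ↔ X.DualTo k a b := by
  simp only [DualTo, g.adj_iff, g.e.injective.mem_set_image]

theorem AutCC.hypCarrier_image (g : X.AutCC) (k : Set X.V) :
    X.hypCarrier (g.e '' k) = g.e '' X.hypCarrier k := by
  ext x
  rw [Set.mem_image_equiv]
  simp only [hypCarrier, Set.mem_ofPred_eq]
  constructor
  · rintro ⟨y, hxy⟩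
    refine ⟨g.e.symm y, ?_⟩
    rwa [← g.dualTo_image_iff, g.e.apply_symm_apply, g.e.apply_symm_apply]
  · rintro ⟨y, hxy⟩
    refine ⟨g.e y, ?_⟩
    rwa [← g.dualTo_image_iff, g.e.apply_symm_apply] at hxy

theorem IsCubical.hypCarrier_eq_image (hX : X.IsCubical) (g : X.AutCC) {h k : Set X.V}
    (hh : h ∈ X.HS) (hk : k ∈ X.HS) {a b : X.V} (hab : X.DualTo k a b)
    (hab' : X.DualTo h (g.e a) (g.e b)) : X.hypCarrier h = g.e '' X.hypCarrier k := by
  rw [← g.hypCarrier_image, (hX.sameHyp_of_dualTo hh (g.hs k hk) hab'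
    (g.dualTo_image_iff.2 hab)).hypCarrier_eq]

theorem exists_finite_edge_reps (hcc : X.Cocompact) (hlf : X.LocFin) :
    ∃ E : Set (X.V × X.V), E.Finite ∧ (∀ e ∈ E, X.adj e.1 e.2) ∧
      ∀ x y, X.adj x y → ∃ e ∈ E, ∃ g : X.AutCC, g.e e.1 = x ∧ g.e e.2 = y := by
  obtain ⟨F, hF, hFV⟩ := hcc
  refine ⟨{e | e.1 ∈ F ∧ X.adj e.1 e.2}, ?_, fun e he => he.2, fun x y hxy => ?_⟩
  · refine (hF.biUnion fun a _ => (Set.finite_singleton a).prod (hlf a)).subset ?_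
    rintro ⟨a, b⟩ ⟨ha, hab⟩
    exact Set.mem_biUnion ha ⟨rfl, hab⟩
  · obtain ⟨g, a, ha, rfl⟩ := hFV x
    refine ⟨(a, g.e.symm y), ⟨ha, ?_⟩, g, rfl, g.e.apply_symm_apply y⟩
    rwa [← g.adj_iff, g.e.apply_symm_apply]

theorem IsUltra.eq_of_subset {α β : Set (Set X.V)} (hα : X.IsUltra α) (hβ : X.IsUltra β)
    (hαβ : α ⊆ β) : α = β := by
  refine hαβ.antisymm fun h hh => ?_
  by_contra hα'
  exact (hβ.2.1 h (hβ.1 hh)).1 hh (hαβ ((hα.2.1 h (hβ.1 hh)).not_left.1 hα'))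

theorem inRoller_of_forall_exists_ssubset {α : Set (Set X.V)}
    (hα : ∀ h ∈ α, ∃ k ∈ α, k ⊂ h) (hne : α.Nonempty) : X.InRoller α := by
  choose next hnext using fun h : α => hα h.1 h.2
  let c : ℕ → α := fun n =>
    (fun h => ⟨next h, (hnext h).1⟩)^[n] ⟨hne.some, hne.some_mem⟩
  refine ⟨fun n => c n, fun n => (c n).2, fun n => ?_⟩
  simp only [c, Function.iterate_succ_apply']
  exact (hnext _).2

end CCC

namespace CCC

variable {X : CCC}

theorem exists_dist_le_of_invariant (hcc : X.Cocompact) {f : ℤ → X.V}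
    (hinv : ∀ g : X.AutCC, ∀ n, g.e (f n) ∈ Set.range f) :
    ∃ M, ∀ v, ∃ n, X.graph.dist v (f n) ≤ M := by
  obtain ⟨F, hF, hFV⟩ := hcc
  obtain ⟨M, hM⟩ := (hF.image fun u => X.graph.dist u (f 0)).bddAbove
  refine ⟨M, fun v => ?_⟩
  obtain ⟨g, u, hu, rfl⟩ := hFV v
  obtain ⟨m, hm⟩ := hinv g 0
  exact ⟨m, by rw [hm, g.dist_map]; exact hM ⟨u, hu, rfl⟩⟩

structure QuasiLine (X : CCC) where
  cubical : X.IsCubical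
  essential : X.Essential
  line : ℤ → X.V
  dist_line : ∀ m n, X.graph.dist (line m) (line n) = (m - n).natAbs
  radius : ℕ
  exists_dist_le : ∀ v, ∃ n, X.graph.dist v (line n) ≤ radius

namespace QuasiLine

variable (L : X.QuasiLine)

def shadow (Y : Set X.V) : Set ℤ := {p | ∃ y ∈ Y, X.graph.dist y (L.line p) ≤ L.radius}

theorem natAbs_sub_le_dist_add_dist (x : X.V) (m n : ℤ) :
    (m - n).natAbs ≤ X.graph.dist x (L.line m) + X.graph.dist x (L.line n) := by
  rw [← L.dist_line, SimpleGraph.dist_comm (u := x)]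
  exact L.cubical.dist_triangle _ x _

theorem exists_dist_le_of_finite_shadow {Y : Set X.V} (hY : (L.shadow Y).Finite) :
    ∃ D, ∀ x ∈ Y, ∀ y ∈ Y, X.graph.dist x y ≤ D := by
  obtain ⟨a, ha⟩ := hY.bddBelow
  obtain ⟨b, hb⟩ := hY.bddAbove
  refine ⟨2 * L.radius + (b - a).toNat, fun x hx y hy => ?_⟩
  obtain ⟨p, hp⟩ := L.exists_dist_le x
  obtain ⟨q, hq⟩ := L.exists_dist_le y
  have hpa := ha ⟨x, hx, hp⟩
  have hpb := hb ⟨x, hx, hp⟩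
  have hqa := ha ⟨y, hy, hq⟩
  have hqb := hb ⟨y, hy, hq⟩
  have h₁ := L.cubical.dist_triangle x (L.line p) y
  have h₂ := L.cubical.dist_triangle (L.line p) (L.line q) y
  rw [L.dist_line, SimpleGraph.dist_comm (u := L.line q)] at h₂
  omega

theorem exists_affine (hinv : ∀ g : X.AutCC, ∀ n, g.e (L.line n) ∈ Set.range L.line)
    (g : X.AutCC) : ∃ s : ℤ, ∃ ε : ℤˣ, ∀ n, g.e (L.line n) = L.line (s + ε * n) := by
  choose σ hσ using hinv g
  obtain ⟨s, ε, hs⟩ := Int.exists_eq_add_mul_of_isometry (σ := σ) fun m n => by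
    rw [← L.dist_line, ← L.dist_line, hσ, hσ, g.dist_map]
  exact ⟨s, ε, fun n => by rw [← hσ, hs]⟩

theorem exists_translation_of_affine {h k : Set X.V} {g₁ g₂ : X.AutCC} {s₁ s₂ : ℤ}
    {ε : ℤˣ} (h₁ : ∀ n, g₁.e (L.line n) = L.line (s₁ + ε * n))
    (h₂ : ∀ n, g₂.e (L.line n) = L.line (s₂ + ε * n)) (hs : s₁ ≠ s₂)
    (hC₁ : X.hypCarrier h = g₁.e '' X.hypCarrier k)
    (hC₂ : X.hypCarrier h = g₂.e '' X.hypCarrier k) :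
    ∃ ψ : X.graph ≃g X.graph, ∃ c ≠ 0, (∀ m, ψ (L.line m) = L.line (m + c)) ∧
      ∀ x, ψ x ∈ X.hypCarrier h ↔ x ∈ X.hypCarrier h := by
  refine ⟨g₁.toIso.symm.trans g₂.toIso, s₂ - s₁, sub_ne_zero.2 hs.symm, fun m => ?_,
    fun x => ?_⟩
  · have hsymm : g₁.e.symm (L.line m) = L.line (ε * (m - s₁)) := by
      rw [Equiv.symm_apply_eq, h₁, ← mul_assoc, ← Units.val_mul, Int.units_mul_self,
        Units.val_one]
      ring_nf
    change g₂.e (g₁.e.symm (L.line m)) = _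
    rw [hsymm, h₂, ← mul_assoc, ← Units.val_mul, Int.units_mul_self, Units.val_one]
    ring_nf
  · change g₂.e (g₁.e.symm x) ∈ _ ↔ _
    conv_lhs => rw [hC₂]
    conv_rhs => rw [hC₁]
    rw [g₂.e.injective.mem_set_image, Set.mem_image_equiv]

/-- Invariance under a translation of the line brings the carrier of `ĥ` uniformly close to
every vertex, against essentiality. -/
theorem false_of_translation {h : Set X.V} (hh : h ∈ X.HS) {p₀ : ℤ}
    (hp₀ : p₀ ∈ L.shadow (X.hypCarrier h)) (ψ : X.graph ≃g X.graph) {c : ℤ}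
    (hc : c ≠ 0) (hψ : ∀ m, ψ (L.line m) = L.line (m + c))
    (hψh : ∀ x, ψ x ∈ X.hypCarrier h ↔ x ∈ X.hypCarrier h) : False := by
  have hper : ∀ p, p ∈ L.shadow (X.hypCarrier h) ↔ p + c ∈ L.shadow (X.hypCarrier h) := by
    refine fun p => ⟨fun ⟨x, hx, hxp⟩ => ⟨ψ x, (hψh x).2 hx, ?_⟩,
      fun ⟨x, hx, hxp⟩ => ⟨ψ.symm x, (hψh _).1 (by rwa [ψ.apply_symm_apply]), ?_⟩⟩
    · rwa [← hψ, ψ.dist_map]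
    · rwa [← ψ.dist_map, ψ.apply_symm_apply, hψ]
  obtain ⟨w, -, hfar⟩ :=
    Essential.exists_lt_dist L.cubical L.essential hh (2 * L.radius + c.natAbs)
  obtain ⟨q, hq⟩ := L.exists_dist_le w
  obtain ⟨p, ⟨x, hx, hxp⟩, hpq⟩ := Int.exists_mem_natAbs_sub_lt_of_periodic hc hp₀ hper q
  have h₁ := L.cubical.dist_triangle w (L.line q) x
  have h₂ := L.cubical.dist_triangle (L.line q) (L.line p) x
  rw [L.dist_line, SimpleGraph.dist_comm (u := L.line p)] at h₂
  have := hfar x hx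
  omega

theorem exists_translation_of_infinite_shadow (hcc : X.Cocompact) (hlf : X.LocFin)
    (hinv : ∀ g : X.AutCC, ∀ n, g.e (L.line n) ∈ Set.range L.line) {h : Set X.V}
    (hh : h ∈ X.HS) (hS : (L.shadow (X.hypCarrier h)).Infinite) :
    ∃ ψ : X.graph ≃g X.graph, ∃ c ≠ 0, (∀ m, ψ (L.line m) = L.line (m + c)) ∧
      ∀ x, ψ x ∈ X.hypCarrier h ↔ x ∈ X.hypCarrier h := by
  obtain ⟨E, hE, hEadj, hEreps⟩ := exists_finite_edge_reps hcc hlf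
  have := hE.to_subtype
  choose k hk hke using fun e : E => L.cubical.exists_dualTo (hEadj e e.2)
  choose pos hpos using fun e : E => L.exists_dist_le e.1.1
  -- every position near `ĥ` is reached by moving one of finitely many edges onto `ĥ`
  have hdata : ∀ p : L.shadow (X.hypCarrier h),
      ∃ e : E, ∃ ε : ℤˣ, ∃ g : X.AutCC, ∃ s : ℤ,
      (∀ n, g.e (L.line n) = L.line (s + ε * n)) ∧
      X.hypCarrier h = g.e '' X.hypCarrier (k e) ∧
      (p.1 - (s + ε * pos e)).natAbs ≤ 2 * L.radius := by
    rintro ⟨p, x, ⟨y, hxy⟩, hxp⟩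
    obtain ⟨e, he, g, rfl, rfl⟩ := hEreps x y hxy.1
    obtain ⟨s, ε, hs⟩ := L.exists_affine hinv g
    refine ⟨⟨e, he⟩, ε, g, s, hs,
      L.cubical.hypCarrier_eq_image g hh (hk _) ⟨hEadj e he, Or.inl (hke _)⟩ hxy, ?_⟩
    have h₁ : X.graph.dist (g.e e.1) (L.line (s + ε * pos ⟨e, he⟩)) ≤ L.radius := by
      rw [← hs, g.dist_map]
      exact hpos ⟨e, he⟩
    have h₂ := L.natAbs_sub_le_dist_add_dist (g.e e.1) p (s + ε * pos ⟨e, he⟩)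
    dsimp only
    omega
  choose e ε g s hs hC hp using hdata
  have := hS.to_subtype
  obtain ⟨⟨e₀, ε₀⟩, hfib⟩ := Finite.exists_infinite_fiber fun p => (e p, ε p)
  obtain ⟨_, ⟨p₁, hp₁, rfl⟩, _, ⟨p₂, hp₂, rfl⟩, hfar⟩ :=
    ((Set.infinite_coe_iff.1 hfib).image Subtype.val_injective.injOn).exists_lt_natAbs_sub
      (4 * L.radius)
  obtain ⟨he₁, hε₁⟩ := Prod.mk.inj hp₁
  obtain ⟨he₂, hε₂⟩ := Prod.mk.inj hp₂
  have hs₁₂ : s p₁ ≠ s p₂ := fun hs₀ => by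
    have h₁ := hp p₁
    have h₂ := hp p₂
    rw [he₁, hε₁] at h₁
    rw [he₂, hε₂] at h₂
    omega
  exact L.exists_translation_of_affine (hε₁ ▸ hs p₁) (hε₂ ▸ hs p₂) hs₁₂
    (he₁ ▸ hC p₁) (he₂ ▸ hC p₂)

theorem exists_dist_le_hypCarrier (hcc : X.Cocompact) (hlf : X.LocFin)
    (hinv : ∀ g : X.AutCC, ∀ n, g.e (L.line n) ∈ Set.range L.line) {h : Set X.V}
    (hh : h ∈ X.HS) :
    ∃ D, ∀ x ∈ X.hypCarrier h, ∀ y ∈ X.hypCarrier h, X.graph.dist x y ≤ D := by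
  refine L.exists_dist_le_of_finite_shadow (Set.not_infinite.1 fun hS => ?_)
  obtain ⟨ψ, c, hc, hψ, hψh⟩ := L.exists_translation_of_infinite_shadow hcc hlf hinv hh hS
  exact L.false_of_translation hh hS.nonempty.some_mem ψ hc hψ hψh

/-- Hyperplanes fall into finitely many orbits, so the bound becomes uniform. -/
theorem exists_hypDiamLE (hcc : X.Cocompact) (hlf : X.LocFin)
    (hinv : ∀ g : X.AutCC, ∀ n, g.e (L.line n) ∈ Set.range L.line) :
    ∃ D, X.HypDiamLE D := by
  obtain ⟨E, hE, hEadj, hEreps⟩ := exists_finite_edge_reps hcc hlf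
  have := hE.to_subtype
  choose k hk hke using fun e : E => L.cubical.exists_dualTo (hEadj e e.2)
  have hdual : ∀ e : E, X.DualTo (k e) e.1.1 e.1.2 := fun e => ⟨hEadj e e.2, Or.inl (hke e)⟩
  choose D hD using fun e : E => L.exists_dist_le_hypCarrier hcc hlf hinv (hk e)
  obtain ⟨B, hB⟩ := (Set.finite_range D).bddAbove
  refine ⟨B, fun h hh u ⟨y, huy⟩ v hv => ?_⟩
  obtain ⟨e, he, g, rfl, rfl⟩ := hEreps _ _ huy.1
  rw [L.cubical.hypCarrier_eq_image g hh (hk ⟨e, he⟩) (hdual ⟨e, he⟩) huy] at hv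
  obtain ⟨v, hv, rfl⟩ := hv
  rw [g.dist_map]
  exact (hD ⟨e, he⟩ _ ⟨_, hdual ⟨e, he⟩⟩ v hv).trans (hB ⟨_, rfl⟩)

def reverse : X.QuasiLine where
  cubical := L.cubical
  essential := L.essential
  line n := L.line (-n)
  dist_line m n := by rw [L.dist_line]; omega
  radius := L.radius
  exists_dist_le v := let ⟨n, hn⟩ := L.exists_dist_le v; ⟨-n, by simpa using hn⟩

def crossings (h : Set X.V) : Set ℤ := {i | ¬(L.line i ∈ h ↔ L.line (i + 1) ∈ h)}

def plusEnd : Set (Set X.V) := {h | h ∈ X.HS ∧ ∀ᶠ n in atTop, L.line n ∈ h}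

theorem mem_reverse_plusEnd {h : Set X.V} :
    h ∈ L.reverse.plusEnd ↔ h ∈ X.HS ∧ ∀ᶠ n in atBot, L.line n ∈ h := by
  rw [← map_neg_atTop, eventually_map]
  rfl

theorem adj_line (n : ℤ) : X.adj (L.line n) (L.line (n + 1)) :=
  L.cubical.graph_adj.1 (SimpleGraph.dist_eq_one_iff_adj.1 (by rw [L.dist_line]; simp))

theorem crossings_compl (h : Set X.V) : L.crossings hᶜ = L.crossings h := by
  ext i
  simp only [crossings, Set.mem_ofPred_eq, Set.mem_compl_iff, not_iff_not]

theorem dualTo_of_mem_crossings {h : Set X.V} {i : ℤ} (hi : i ∈ L.crossings h) :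
    X.DualTo h (L.line i) (L.line (i + 1)) :=
  ⟨L.adj_line i, by simp only [crossings, Set.mem_ofPred_eq] at hi; tauto⟩

theorem line_mem_hypCarrier {h : Set X.V} {i : ℤ} (hi : i ∈ L.crossings h) :
    L.line i ∈ X.hypCarrier h :=
  ⟨_, L.dualTo_of_mem_crossings hi⟩

theorem not_eventually_atTop_and_atBot {h : Set X.V} (hh : h ∈ X.HS) :
    ¬((∀ᶠ n in atTop, L.line n ∈ h) ∧ ∀ᶠ n in atBot, L.line n ∈ h) := by
  rintro ⟨htop, hbot⟩
  obtain ⟨a, ha⟩ := eventually_atTop.1 htop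
  obtain ⟨b, hb⟩ := eventually_atBot.1 hbot
  obtain ⟨w, hw, hfar⟩ := Essential.exists_lt_dist L.cubical L.essential
    (L.cubical.compl_mem hh) (L.radius + (a - b).toNat)
  obtain ⟨m, hm⟩ := L.exists_dist_le w
  obtain ⟨n, hn, hmn⟩ : ∃ n, L.line n ∈ h ∧ (m - n).natAbs ≤ (a - b).toNat := by
    rcases le_or_gt m b with hmb | hmb
    · exact ⟨m, hb m hmb, by simp⟩
    · exact ⟨max m a, ha _ (le_max_right m a), by omega⟩
  obtain ⟨c, hc, hwc⟩ := L.cubical.exists_mem_hypCarrier_dist_le (h := hᶜ) (x := w)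
    (y := L.line n) (by simp only [Set.mem_compl_iff] at hw ⊢; tauto)
  have := hfar c hc
  have := L.cubical.dist_triangle w (L.line m) (L.line n)
  rw [L.dist_line] at this
  omega

variable {D : ℕ}

theorem natAbs_sub_le_of_mem_crossings (hD : X.HypDiamLE D) {h : Set X.V} (hh : h ∈ X.HS)
    {i j : ℤ} (hi : i ∈ L.crossings h) (hj : j ∈ L.crossings h) : (i - j).natAbs ≤ D := by
  rw [← L.dist_line]
  exact hD h hh _ (L.line_mem_hypCarrier hi) _ (L.line_mem_hypCarrier hj)

theorem mem_iff_eventually_atTop (hD : X.HypDiamLE D) {h : Set X.V} (hh : h ∈ X.HS) {i : ℤ}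
    (hi : i ∈ L.crossings h) {m : ℤ} (hm : i + D < m) :
    L.line m ∈ h ↔ ∀ᶠ n in atTop, L.line n ∈ h := by
  have hconst : ∀ n, i + D < n → (L.line n ∈ h ↔ L.line (i + D + 1) ∈ h) := fun n hn =>
    Int.iff_of_forall_iff_succ_of_le (P := (L.line · ∈ h)) (fun j hj => by_contra fun hj' => by
      have := L.natAbs_sub_le_of_mem_crossings hD hh hj' hi
      omega) (by omega)
  rw [hconst m hm, eventually_atTop]
  exact ⟨fun H => ⟨i + D + 1, fun n hn => (hconst n (by omega)).2 H⟩,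
    fun ⟨a, ha⟩ => (hconst _ (by omega)).1 (ha (max a (i + D + 1)) (le_max_left _ _))⟩

theorem mem_iff_eventually_atBot (hD : X.HypDiamLE D) {h : Set X.V} (hh : h ∈ X.HS) {i : ℤ}
    (hi : i ∈ L.crossings h) {m : ℤ} (hm : m ≤ i - D) :
    L.line m ∈ h ↔ ∀ᶠ n in atBot, L.line n ∈ h := by
  have hconst : ∀ n, n ≤ i - D → (L.line n ∈ h ↔ L.line (i - D) ∈ h) := fun n hn =>
    Int.iff_of_forall_iff_succ_of_lt (P := (L.line · ∈ h)) (fun j hj => by_contra fun hj' => by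
      have := L.natAbs_sub_le_of_mem_crossings hD hh hj' hi
      omega) hn
  rw [hconst m hm, eventually_atBot]
  exact ⟨fun H => ⟨i - D, fun n hn => (hconst n hn).2 H⟩,
    fun ⟨a, ha⟩ => (hconst _ (min_le_right _ _)).1 (ha (min a (i - D)) (min_le_left _ _))⟩

theorem crossings_nonempty {h : Set X.V} (hh : h ∈ X.HS) : (L.crossings h).Nonempty := by
  by_contra hne
  have hP : ∀ i, (L.line i ∈ h ↔ L.line (i + 1) ∈ h) := fun i =>
    by_contra fun hi => hne ⟨i, hi⟩
  have hconst : ∀ n, L.line n ∈ h ↔ L.line 0 ∈ h := fun n => (le_total 0 n).elim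
    (Int.iff_of_forall_iff_succ_of_le fun i _ => hP i)
    (Int.iff_of_forall_iff_succ_of_lt fun i _ => hP i)
  by_cases h₀ : L.line 0 ∈ h
  · exact L.not_eventually_atTop_and_atBot hh
      ⟨.of_forall fun n => (hconst n).2 h₀, .of_forall fun n => (hconst n).2 h₀⟩
  · exact L.not_eventually_atTop_and_atBot (L.cubical.compl_mem hh)
      ⟨.of_forall fun n => (hconst n).not.2 h₀, .of_forall fun n => (hconst n).not.2 h₀⟩

theorem isUltra_plusEnd (hD : X.HypDiamLE D) : X.IsUltra L.plusEnd := by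
  refine ⟨fun h hh => hh.1, fun h hh => ?_,
    fun h hh k hk hhk => ⟨hk, hh.2.mono fun n hn => hhk hn⟩⟩
  obtain ⟨i, hi⟩ := L.crossings_nonempty hh
  have hc := L.cubical.compl_mem hh
  have e₁ := L.mem_iff_eventually_atTop hD hh hi (lt_add_one (i + D))
  have e₂ := L.mem_iff_eventually_atTop hD hc ((L.crossings_compl h).symm ▸ hi)
    (lt_add_one (i + D))
  simp only [plusEnd, Set.mem_ofPred_eq, Set.mem_compl_iff, hh, hc, true_and] at e₁ e₂ ⊢
  tauto

theorem mem_reverse_plusEnd_iff (hD : X.HypDiamLE D) {h : Set X.V} (hh : h ∈ X.HS) :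
    h ∈ L.reverse.plusEnd ↔ h ∉ L.plusEnd := by
  obtain ⟨i, hi⟩ := L.crossings_nonempty hh
  have hc := L.cubical.compl_mem hh
  have hi' : i ∈ L.crossings hᶜ := (L.crossings_compl h).symm ▸ hi
  have e₁ := L.mem_iff_eventually_atTop hD hh hi (lt_add_one (i + D))
  have e₂ := L.mem_iff_eventually_atBot hD hh hi le_rfl
  have e₃ := L.mem_iff_eventually_atTop hD hc hi' (lt_add_one (i + D))
  have e₄ := L.mem_iff_eventually_atBot hD hc hi' le_rfl
  have n₁ := L.not_eventually_atTop_and_atBot hh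
  have n₂ := L.not_eventually_atTop_and_atBot hc
  rw [L.mem_reverse_plusEnd]
  simp only [plusEnd, Set.mem_ofPred_eq, Set.mem_compl_iff, hh, true_and] at e₃ e₄ n₂ ⊢
  tauto

theorem exists_mem_plusEnd_mem_crossings (hD : X.HypDiamLE D) (n : ℤ) :
    ∃ k ∈ L.plusEnd, n ∈ L.crossings k := by
  obtain ⟨k, hk, hnk, hnk'⟩ := L.cubical.exists_dualTo (L.adj_line n)
  have hn : n ∈ L.crossings k := fun hiff => hnk' (hiff.1 hnk)
  by_cases hkp : k ∈ L.plusEnd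
  · exact ⟨k, hkp, hn⟩
  · refine ⟨kᶜ, ((L.isUltra_plusEnd hD).2.1 kᶜ (L.cubical.compl_mem hk)).2 ?_, ?_⟩
    · rwa [compl_compl]
    · rwa [crossings_compl]

/-- Vertices on opposite sides of `ĥ` are separated by a vertex of its carrier, which lies within
`D` of every crossing. -/
theorem natAbs_sub_le_of_not_iff (hD : X.HypDiamLE D) {h : Set X.V} (hh : h ∈ X.HS) {i : ℤ}
    (hi : i ∈ L.crossings h) {x : X.V} {m : ℤ} (hx : ¬(x ∈ h ↔ L.line m ∈ h)) :
    (m - i).natAbs ≤ D + 2 * X.graph.dist x (L.line m) := by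
  obtain ⟨a, ha, hxa⟩ := L.cubical.exists_mem_hypCarrier_dist_le hx
  have h₁ := hD h hh a ha _ (L.line_mem_hypCarrier hi)
  have h₂ := L.natAbs_sub_le_dist_add_dist a m i
  have h₃ := L.cubical.dist_triangle a x (L.line m)
  rw [SimpleGraph.dist_comm (u := a) (v := x)] at h₃
  omega

theorem line_not_mem_of_le (hD : X.HypDiamLE D) {k : Set X.V} (hk : k ∈ L.plusEnd) {j : ℤ}
    (hj : j ∈ L.crossings k) {m : ℤ} (hm : m ≤ j - D) : L.line m ∉ k := fun hmk =>
  L.not_eventually_atTop_and_atBot hk.1 ⟨hk.2, (L.mem_iff_eventually_atBot hD hk.1 hj hm).1 hmk⟩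

theorem crossing_le_of_mem (hD : X.HypDiamLE D) {k : Set X.V} (hk : k ∈ L.plusEnd) {j : ℤ}
    (hj : j ∈ L.crossings k) {x : X.V} (hx : x ∈ k) (m : ℤ) :
    j ≤ m + D + 2 * X.graph.dist x (L.line m) := by
  by_cases hm : L.line m ∈ k
  · by_contra! hjm
    exact L.line_not_mem_of_le hD hk hj (by omega) hm
  · have := L.natAbs_sub_le_of_not_iff hD hk.1 hj (x := x) (m := m) (by tauto)
    omega

theorem le_crossing_of_not_mem (hD : X.HypDiamLE D) {h : Set X.V} (hh : h ∈ L.plusEnd) {i : ℤ}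
    (hi : i ∈ L.crossings h) {x : X.V} (hx : x ∉ h) (m : ℤ) :
    m ≤ i + D + 2 * X.graph.dist x (L.line m) := by
  by_cases hm : L.line m ∈ h
  · have := L.natAbs_sub_le_of_not_iff hD hh.1 hi (x := x) (m := m) (by tauto)
    omega
  · by_contra! hmi
    exact hm ((L.mem_iff_eventually_atTop hD hh.1 hi (by omega)).2 hh.2)

theorem ssubset_of_crossing_lt (hD : X.HypDiamLE D) {h k : Set X.V} (hh : h ∈ L.plusEnd)
    (hk : k ∈ L.plusEnd) {i j : ℤ} (hi : i ∈ L.crossings h) (hj : j ∈ L.crossings k)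
    (hij : i + 2 * D + 4 * L.radius < j) : k ⊂ h := by
  refine ⟨fun x hxk => by_contra fun hxh => ?_, fun hhk => ?_⟩
  · obtain ⟨m, hm⟩ := L.exists_dist_le x
    have := L.crossing_le_of_mem hD hk hj hxk m
    have := L.le_crossing_of_not_mem hD hh hi hxh m
    omega
  · exact L.line_not_mem_of_le hD hk hj (m := i + D + 1) (by omega)
      (hhk ((L.mem_iff_eventually_atTop hD hh.1 hi (lt_add_one _)).2 hh.2))

theorem nonTerminating_plusEnd (hD : X.HypDiamLE D) : X.NonTerminating L.plusEnd := by
  refine ⟨L.isUltra_plusEnd hD, fun h hh => ?_⟩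
  obtain ⟨i, hi⟩ := L.crossings_nonempty hh.1
  obtain ⟨k, hk, hj⟩ := L.exists_mem_plusEnd_mem_crossings hD (i + 2 * D + 4 * L.radius + 1)
  exact ⟨k, hk, L.ssubset_of_crossing_lt hD hh hk hi hj (lt_add_one _)⟩

theorem inRoller_plusEnd (hD : X.HypDiamLE D) : X.InRoller L.plusEnd :=
  inRoller_of_forall_exists_ssubset (L.nonTerminating_plusEnd hD).2
    (let ⟨k, hk, _⟩ := L.exists_mem_plusEnd_mem_crossings hD 0; ⟨k, hk⟩)

theorem finite_setOf_crossing_mem_Icc (a b : ℤ) :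
    {h | h ∈ X.HS ∧ ∃ i ∈ L.crossings h, i ∈ Set.Icc a b}.Finite := by
  choose k hk hk' using fun i => L.cubical.exists_dualTo (L.adj_line i)
  refine ((Set.finite_Icc a b).biUnion fun i _ => Set.toFinite {k i, (k i)ᶜ}).subset ?_
  rintro h ⟨hh, i, hi, hiab⟩
  refine Set.mem_biUnion hiab ?_
  rcases L.cubical.sameHyp_of_dualTo (hk i) hh ⟨L.adj_line i, Or.inl (hk' i)⟩
    (L.dualTo_of_mem_crossings hi) with rfl | rfl <;> simp

theorem exists_lt_crossing (hD : X.HypDiamLE D) {c : ℕ → Set X.V}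
    (hc : ∀ n, c (n + 1) ⊂ c n) (hU : {n | c n ∈ L.plusEnd}.Infinite) (B : ℤ) :
    ∃ n, c n ∈ L.plusEnd ∧ ∃ j ∈ L.crossings (c n), B < j := by
  by_contra! hB
  have hanti : StrictAnti c := strictAnti_nat_of_succ_lt hc
  obtain ⟨n₀, hn₀⟩ := hU.nonempty
  obtain ⟨i₀, hi₀⟩ := L.crossings_nonempty hn₀.1
  refine Set.Infinite.mono ?_ ((hU.sdiff (Set.finite_Iio n₀)).image hanti.injective.injOn)
    (L.finite_setOf_crossing_mem_Icc (i₀ - 2 * D - 1) B)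
  rintro _ ⟨n, ⟨hn, hn₀n⟩, rfl⟩
  obtain ⟨j, hj⟩ := L.crossings_nonempty hn.1
  refine ⟨hn.1, j, hj, ?_, hB n hn j hj⟩
  have hsub : c n ⊆ c n₀ := hanti.antitone (not_lt.1 hn₀n)
  have := L.crossing_le_of_mem hD hn₀ hi₀
    (hsub ((L.mem_iff_eventually_atTop hD hn.1 hj (lt_add_one _)).2 hn.2)) (j + D + 1)
  rw [SimpleGraph.dist_self] at this
  omega

theorem eq_plusEnd_of_infinite (hD : X.HypDiamLE D) {α : Set (Set X.V)} (hα : X.IsUltra α)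
    {c : ℕ → Set X.V} (hcα : ∀ n, c n ∈ α) (hc : ∀ n, c (n + 1) ⊂ c n)
    (hU : {n | c n ∈ L.plusEnd}.Infinite) : α = L.plusEnd := by
  refine ((L.isUltra_plusEnd hD).eq_of_subset hα fun k hk => ?_).symm
  obtain ⟨i, hi⟩ := L.crossings_nonempty hk.1
  obtain ⟨n, hn, j, hj, hij⟩ := L.exists_lt_crossing hD hc hU (i + 2 * D + 4 * L.radius)
  exact hα.2.2 _ (hcα n) k hk.1 (L.ssubset_of_crossing_lt hD hk hn hi hj hij).1

theorem eq_plusEnd_or_eq_reverse_plusEnd (hD : X.HypDiamLE D) {α : Set (Set X.V)}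
    (hα : X.IsUltra α) (hr : X.InRoller α) : α = L.plusEnd ∨ α = L.reverse.plusEnd := by
  obtain ⟨c, hcα, hc⟩ := hr
  by_cases hU : {n | c n ∈ L.plusEnd}.Infinite
  · exact .inl (L.eq_plusEnd_of_infinite hD hα hcα hc hU)
  · refine .inr (L.reverse.eq_plusEnd_of_infinite hD hα hcα hc
      ((Set.not_infinite.1 hU).infinite_compl.mono fun n hn => ?_))
    exact (L.mem_reverse_plusEnd_iff hD (hα.1 (hcα n))).2 hn

theorem exists_hypIn_of_subset_plusEnd (hD : X.HypDiamLE D) {K : Set (Set X.V)}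
    (hK : K ⊆ L.plusEnd) (hcage : X.Cage K) : ∃ h ∈ X.HS, ∀ k ∈ K, X.HypIn h k := by
  obtain ⟨-, v, hv⟩ := hcage
  obtain ⟨p, hp⟩ := L.exists_dist_le v
  obtain ⟨h, hh, hn⟩ := L.exists_mem_plusEnd_mem_crossings hD (p + L.radius + 4 * D + 1)
  -- `ĥ` crosses the line far beyond the cage, hence lies deep inside every `k ∈ K`
  have hsub : ∀ k ∈ K, X.hypCarrier h ⊆ k := by
    intro k hk z hz
    by_contra hzk
    obtain ⟨j, hj⟩ := L.crossings_nonempty (hK hk).1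
    have hvk : v ∈ X.hypCarrier k :=
      carrier_union_carrier_compl k ▸ Or.inl (Set.mem_iInter₂.1 hv k hk)
    have h₁ := hD k (hK hk).1 v hvk _ (L.line_mem_hypCarrier hj)
    have h₂ := L.natAbs_sub_le_dist_add_dist v p j
    have h₃ := hD h hh.1 z hz _ (L.line_mem_hypCarrier hn)
    have h₄ := L.le_crossing_of_not_mem hD (hK hk) hj hzk (p + L.radius + 4 * D + 1)
    omega
  refine ⟨h, hh.1, fun k hk => ⟨⟨_, _, L.dualTo_of_mem_crossings hn⟩, fun a b hab =>
    ⟨hsub k hk ⟨b, hab⟩, hsub k hk ⟨a, L.cubical.dualTo_comm.1 hab⟩⟩⟩⟩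

end QuasiLine

variable {D : ℕ}

theorem QuasiLine.nonTerminating_of_inRoller (L : X.QuasiLine) (hD : X.HypDiamLE D)
    {α : Set (Set X.V)} (hα : X.IsUltra α) (hr : X.InRoller α) : X.NonTerminating α := by
  rcases L.eq_plusEnd_or_eq_reverse_plusEnd hD hα hr with rfl | rfl
  exacts [L.nonTerminating_plusEnd hD, L.reverse.nonTerminating_plusEnd hD]

theorem QuasiLine.setOf_inRoller_eq_setOf_inBX (L : X.QuasiLine) (hD : X.HypDiamLE D) :
    {α | X.IsUltra α ∧ X.InRoller α} = {α | X.InBX α} := by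
  ext α
  refine ⟨fun ⟨hα, hr⟩ => ⟨hα, fun H hH _ =>
    ⟨α, L.nonTerminating_of_inRoller hD hα hr, hH⟩⟩, fun ⟨hα, hB⟩ => ⟨hα, ?_⟩⟩
  -- a finite subset of `α` outside both ends would lie in a non-terminating ultrafilter
  suffices α ⊆ L.plusEnd ∨ α ⊆ L.reverse.plusEnd by
    rcases this with hsub | hsub
    · rw [hα.eq_of_subset (L.isUltra_plusEnd hD) hsub]
      exact L.inRoller_plusEnd hD
    · rw [hα.eq_of_subset (L.reverse.isUltra_plusEnd hD) hsub]
      exact L.reverse.inRoller_plusEnd hD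
  by_contra! ⟨h₁, h₂⟩
  obtain ⟨a, ha, ha'⟩ := Set.not_subset.1 h₁
  obtain ⟨b, hb, hb'⟩ := Set.not_subset.1 h₂
  obtain ⟨β, hβ, hab⟩ := hB {a, b} (Set.insert_subset ha (Set.singleton_subset_iff.2 hb))
    ((Set.finite_singleton b).insert a)
  have hβr := inRoller_of_forall_exists_ssubset hβ.2 ⟨a, hab (by simp)⟩
  rcases L.eq_plusEnd_or_eq_reverse_plusEnd hD hβ.1 hβr with rfl | rfl
  exacts [ha' (hab (by simp)), hb' (hab (by simp))]

theorem QuasiLine.cagedHyperplanes (L : X.QuasiLine) (hD : X.HypDiamLE D) :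
    X.CagedHyperplanes := by
  intro α hα hr K hK hcage
  rcases L.eq_plusEnd_or_eq_reverse_plusEnd hD hα hr with rfl | rfl
  exacts [L.exists_hypIn_of_subset_plusEnd hD hK hcage,
    L.reverse.exists_hypIn_of_subset_plusEnd hD hK hcage]

theorem HypDiamLE.not_isTightCage (hX : X.IsCubical) (hD : X.HypDiamLE D)
    (S T : Set (Set X.V)) : ¬X.IsTightCage S T := by
  rintro ⟨-, hT, -, -, hT2, -, hunb, -⟩
  obtain ⟨t, ht⟩ := Set.nonempty_of_ncard_ne_zero (by omega : T.ncard ≠ 0)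
  obtain ⟨u, hu, v, hv, huv⟩ := hunb D
  have hcar : ∀ w ∈ X.core S T, w ∈ X.hypCarrier t := fun w hw =>
    carrier_union_carrier_compl t ▸ Or.inl (Set.mem_iInter₂.1 hw.1 t ht)
  rw [hX.edist_eq_dist, Nat.cast_lt] at huv
  exact (hD t (hT ht) u (hcar u hu) v (hcar v hv)).not_gt huv

end CCC

theorem stmt13_general (X : CCC) (hX : X.IsCubical) (hess : X.Essential)
    (hcc : X.Cocompact) (hlf : X.LocFin)
    (hline : InvariantLine X) :
    (∀ h ∈ X.HS, ∃ D : ℕ, ∀ u ∈ X.carrier h ∪ X.carrier hᶜ,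
      ∀ v ∈ X.carrier h ∪ X.carrier hᶜ, X.edist u v ≤ (D : ℕ∞)) ∧
    (∀ α : Set (Set X.V), X.IsUltra α → X.InRoller α → X.NonTerminating α) ∧
    ({α : Set (Set X.V) | X.IsUltra α ∧ X.InRoller α} =
      {α : Set (Set X.V) | X.InBX α}) ∧
    X.CagedHyperplanes ∧
    ¬ ∃ S T : Set (Set X.V), X.IsTightCage S T := by
  obtain ⟨f, hf, hinv⟩ := hline
  obtain ⟨M, hM⟩ := CCC.exists_dist_le_of_invariant hcc hinv
  let L : X.QuasiLine := ⟨hX, hess, f, fun m n => by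
    rw [← Nat.cast_inj (R := ℕ∞), ← hX.edist_eq_dist, hf], M, hM⟩
  obtain ⟨D, hD⟩ := L.exists_hypDiamLE hcc hlf hinv
  refine ⟨fun h hh => ⟨D, fun u hu v hv => ?_⟩, fun α => L.nonTerminating_of_inRoller hD,
    L.setOf_inRoller_eq_setOf_inBX hD, L.cagedHyperplanes hD,
    fun ⟨S, T, hST⟩ => hD.not_isTightCage hX S T hST⟩
  rw [CCC.carrier_union_carrier_compl] at hu hv
  rw [hX.edist_eq_dist, Nat.cast_le]
  exact hD h hh u hu v hv

/-- for an essential, cocompact, locally finite, Euclidean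
cube complex of Euclidean dimension 1: every hyperplane has finite diameter,
every ultrafilter of ∂X is non-terminating, ∂X = B(X), X has caged
hyperplanes, and X contains no tight cage. -/
theorem stmt13 (X : CCC) (hX : X.IsCubical) (hess : X.Essential)
    (hcc : X.Cocompact) (hlf : X.LocFin)
    (hline : InvariantLine X) (hnoflat : ∀ n, 2 ≤ n → ¬ InvariantFlat X n) :
    (∀ h ∈ X.HS, ∃ D : ℕ, ∀ u ∈ X.carrier h ∪ X.carrier hᶜ,
      ∀ v ∈ X.carrier h ∪ X.carrier hᶜ, X.edist u v ≤ (D : ℕ∞)) ∧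
    (∀ α : Set (Set X.V), X.IsUltra α → X.InRoller α → X.NonTerminating α) ∧
    ({α : Set (Set X.V) | X.IsUltra α ∧ X.InRoller α} =
      {α : Set (Set X.V) | X.InBX α}) ∧
    X.CagedHyperplanes ∧
    ¬ ∃ S T : Set (Set X.V), X.IsTightCage S T :=
  stmt13_general X hX hess hcc hlf hline
end
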